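/- Fix a function h : ℂ → ℂ and for distinct ξ, η ∈ ℂ and f : ℂ → ℂ define (T^η f)(ξ) = (ξη/(2(ξ−η)))·(f(ξ)h(η) − f(η)h(ξ)). Then for every f : ℂ → ℂ and pairwise distinct ξ, η, τ ∈ ℂ, the value S(ξ, η, τ) := (T^τ(T^η f))(ξ) (where T^η f is applied as a function of its first variable) is a symmetric function of (ξ, η, τ): it is unchanged under every permutation of ξ, η, τ. In particular the generalized translation operators satisfy the commutativity T^τ ∘ T^η = T^η ∘ T^τ and the associativity relation T_ξ^η T_ξ^τ = T_η^τ T_ξ^η. -/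
import Mathlib

set_option maxHeartbeats 2000000


/-- The generalized translation operator associated with a fixed function `h`:
`(T^η f)(ξ) = (ξη/(2(ξ−η)))·(f(ξ)h(η) − f(η)h(ξ))`. -/
noncomputable def Tgen (h : ℂ → ℂ) (η : ℂ) (f : ℂ → ℂ) : ℂ → ℂ :=
  fun ξ => ξ * η / (2 * (ξ - η)) * (f ξ * h η - f η * h ξ)

/-- For every `f` and pairwise distinct `ξ, η, τ`, the value
`S(ξ, η, τ) = (T^τ(T^η f))(ξ)` is a symmetric function of `(ξ, η, τ)`: it is unchanged
under every permutation of `ξ, η, τ`. In particular `T^τ ∘ T^η = T^η ∘ T^τ`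
(commutativity) and the associativity relation `T_ξ^η T_ξ^τ = T_η^τ T_ξ^η` hold. -/
theorem statement13 (h : ℂ → ℂ) (f : ℂ → ℂ) (ξ η τ : ℂ)
    (hξη : ξ ≠ η) (hξτ : ξ ≠ τ) (hητ : η ≠ τ) :
    Tgen h τ (Tgen h η f) ξ = Tgen h η (Tgen h τ f) ξ  -- S(ξ,η,τ) = S(ξ,τ,η)
    ∧ Tgen h τ (Tgen h η f) ξ = Tgen h τ (Tgen h ξ f) η  -- S(ξ,η,τ) = S(η,ξ,τ)
    ∧ Tgen h τ (Tgen h η f) ξ = Tgen h ξ (Tgen h τ f) η  -- S(ξ,η,τ) = S(η,τ,ξ)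
    ∧ Tgen h τ (Tgen h η f) ξ = Tgen h η (Tgen h ξ f) τ  -- S(ξ,η,τ) = S(τ,ξ,η)
    ∧ Tgen h τ (Tgen h η f) ξ = Tgen h ξ (Tgen h η f) τ  -- S(ξ,η,τ) = S(τ,η,ξ)
    := by
  have h1 : ξ - η ≠ 0 := sub_ne_zero.mpr hξη
  have h2 : ξ - τ ≠ 0 := sub_ne_zero.mpr hξτ
  have h3 : η - τ ≠ 0 := sub_ne_zero.mpr hητ
  have h4 : η - ξ ≠ 0 := sub_ne_zero.mpr hξη.symm
  have h5 : τ - ξ ≠ 0 := sub_ne_zero.mpr hξτ.symm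
  have h6 : τ - η ≠ 0 := sub_ne_zero.mpr hητ.symm
  refine ⟨?_, ?_, ?_, ?_, ?_⟩ <;> (simp only [Tgen]; field_simp; ring)
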